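/- arXiv:1205.2094 — 6 statements merged into one kernel-verified Lean document; each statement's English description precedes it below -/
import Mathlib

section
/- Let ‖·‖ be a norm on ℝⁿ, let S ⊆ ℝⁿ, let D ≥ 1, and suppose there exists an ultrametric ρ on S with ‖x−y‖ ≤ ρ(x,y) ≤ D·‖x−y‖ for all x,y ∈ S. Let r > 0 and let C be a path-connected subset of S + B°(r), where B°(r) = {x : ‖x‖ < r} and + denotes Minkowski sum. Then diam(C) ≤ 2(D+1)r. -/
/-!
Fix a point `x₀ ∈ S` close to `C`. By the strong triangle inequality, every point of `S` is
either `ρ`-close to `x₀` (`ρ x₀ s < 2Dr`) or at `ρ`-distance at least `2Dr` from all the points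
that are; since `ρ ≤ D · dist`, the two kinds of points are `2r`-separated, so their
`r`-thickenings are disjoint open sets covering `C`. Connectedness puts `C` in the first one,
and then any two points of `C` are within `r + 2Dr + r` of each other.

As `S + B°(r)` is the `r`-thickening of `S`, the argument runs in any pseudometric space.
-/

open Metric Pointwise

section

variable {X : Type*} [PseudoMetricSpace X]

theorem disjoint_thickening_of_forall_le_dist {A B : Set X} {r : ℝ}
    (h : ∀ a ∈ A, ∀ b ∈ B, 2 * r ≤ dist a b) : Disjoint (thickening r A) (thickening r B) := by
  refine Set.disjoint_left.mpr fun z hzA hzB => ?_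
  obtain ⟨a, ha, hza⟩ := mem_thickening_iff.mp hzA
  obtain ⟨b, hb, hzb⟩ := mem_thickening_iff.mp hzB
  have := dist_triangle_left a b z
  linarith [h a ha b hb]

variable {S : Set X} {ρ : X → X → ℝ} {D : ℝ}

theorem le_mul_dist_of_ultrametric
    (hultra : ∀ x ∈ S, ∀ y ∈ S, ∀ z ∈ S, ρ x y ≤ max (ρ x z) (ρ z y))
    (hup : ∀ x ∈ S, ∀ y ∈ S, ρ x y ≤ D * dist x y) {x₀ a b : X} {t : ℝ}
    (hx₀ : x₀ ∈ S) (ha : a ∈ S) (hb : b ∈ S) (hat : ρ x₀ a < t) (htb : t ≤ ρ x₀ b) :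
    t ≤ D * dist a b := by
  have hρ : t ≤ ρ a b := by
    by_contra! hlt
    exact (htb.trans (hultra x₀ hx₀ b hb a ha)).not_gt (max_lt hat hlt)
  exact hρ.trans (hup a ha b hb)

theorem IsPreconnected.subset_thickening_ultrametric_ball (hD : 0 < D)
    (hultra : ∀ x ∈ S, ∀ y ∈ S, ∀ z ∈ S, ρ x y ≤ max (ρ x z) (ρ z y))
    (hup : ∀ x ∈ S, ∀ y ∈ S, ρ x y ≤ D * dist x y) {r : ℝ} {C : Set X}
    (hC : IsPreconnected C) (hCS : C ⊆ thickening r S) {x x₀ : X} (hx : x ∈ C) (hx₀ : x₀ ∈ S)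
    (hxx₀ : dist x x₀ < r) :
    C ⊆ thickening r {s ∈ S | ρ x₀ s < 2 * D * r} := by
  set T := {s ∈ S | ρ x₀ s < 2 * D * r}
  set U := {s ∈ S | 2 * D * r ≤ ρ x₀ s}
  have hcover : C ⊆ thickening r T ∪ thickening r U := by
    rw [← thickening_union]
    refine hCS.trans (thickening_subset_of_subset r fun s hs => ?_)
    exact (lt_or_ge (ρ x₀ s) _).imp (⟨hs, ·⟩) (⟨hs, ·⟩)
  have hTU : Disjoint (thickening r T) (thickening r U) := by
    refine disjoint_thickening_of_forall_le_dist fun a ha b hb => ?_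
    have := le_mul_dist_of_ultrametric hultra hup hx₀ ha.1 hb.1 ha.2 hb.2
    exact (mul_le_mul_iff_right₀ hD).mp (by linarith)
  have hx₀T : x₀ ∈ T := by
    refine ⟨hx₀, (hup x₀ hx₀ x₀ hx₀).trans_lt ?_⟩
    have : 0 < r := dist_nonneg.trans_lt hxx₀
    rw [dist_self, mul_zero]
    positivity
  refine hC.subset_left_of_subset_union isOpen_thickening isOpen_thickening hTU
    hcover ⟨x, hx, mem_thickening_iff.mpr ⟨x₀, hx₀T, hxx₀⟩⟩

theorem IsPreconnected.diam_le_of_subset_thickening_ultrametric (hD : 0 < D)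
    (hultra : ∀ x ∈ S, ∀ y ∈ S, ∀ z ∈ S, ρ x y ≤ max (ρ x z) (ρ z y))
    (hlow : ∀ x ∈ S, ∀ y ∈ S, dist x y ≤ ρ x y)
    (hup : ∀ x ∈ S, ∀ y ∈ S, ρ x y ≤ D * dist x y) {r : ℝ} (hr : 0 ≤ r) {C : Set X}
    (hC : IsPreconnected C) (hCS : C ⊆ thickening r S) :
    diam C ≤ 2 * (D + 1) * r := by
  refine diam_le_of_forall_dist_le (by positivity) fun x hx y hy => ?_
  obtain ⟨x₀, hx₀, hxx₀⟩ := mem_thickening_iff.mp (hCS hx)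
  obtain ⟨s, ⟨hs, hx₀s⟩, hys⟩ := mem_thickening_iff.mp
    (hC.subset_thickening_ultrametric_ball hD hultra hup hCS hx hx₀ hxx₀ hy)
  calc dist x y ≤ dist x x₀ + dist x₀ s + dist s y := dist_triangle4 x x₀ s y
    _ ≤ r + 2 * D * r + r := by
      gcongr
      · exact (hlow x₀ hx₀ s hs).trans hx₀s.le
      · exact (dist_comm s y).trans_le hys.le
    _ = 2 * (D + 1) * r := by ring

end

theorem stmt_2_general {E : Type*} [NormedAddCommGroup E]
    (S : Set E) (D : ℝ) (hD : 1 ≤ D) (ρ : E → E → ℝ)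
    (hultra : ∀ x ∈ S, ∀ y ∈ S, ∀ z ∈ S, ρ x y ≤ max (ρ x z) (ρ z y))
    (hlow : ∀ x ∈ S, ∀ y ∈ S, ‖x - y‖ ≤ ρ x y)
    (hup : ∀ x ∈ S, ∀ y ∈ S, ρ x y ≤ D * ‖x - y‖)
    (r : ℝ) (hr : 0 < r) (C : Set E) (hCsub : C ⊆ S + ball (0 : E) r)
    (hCpath : IsPathConnected C) :
    Metric.diam C ≤ 2 * (D + 1) * r := by
  rw [add_ball_zero] at hCsub
  simp only [← dist_eq_norm] at hlow hup
  exact hCpath.isConnected.isPreconnected.diam_le_of_subset_thickening_ultrametric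
    (by linarith) hultra hlow hup hr.le hCsub

/-- Claim 2 of the paper: if `S ⊆ ℝⁿ` (a finite-dimensional real normed space) admits an
ultrametric `ρ` with `‖x-y‖ ≤ ρ(x,y) ≤ D‖x-y‖` on `S`, and `C` is a path-connected subset
of the Minkowski sum `S + B°(r)`, then `diam C ≤ 2(D+1)r`. -/
theorem stmt_2 {E : Type*} [NormedAddCommGroup E] [NormedSpace ℝ E] [FiniteDimensional ℝ E]
    (S : Set E) (D : ℝ) (hD : 1 ≤ D) (ρ : E → E → ℝ)
    (hsymm : ∀ x ∈ S, ∀ y ∈ S, ρ x y = ρ y x)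
    (hultra : ∀ x ∈ S, ∀ y ∈ S, ∀ z ∈ S, ρ x y ≤ max (ρ x z) (ρ z y))
    (hlow : ∀ x ∈ S, ∀ y ∈ S, ‖x - y‖ ≤ ρ x y)
    (hup : ∀ x ∈ S, ∀ y ∈ S, ρ x y ≤ D * ‖x - y‖)
    (r : ℝ) (hr : 0 < r) (C : Set E) (hCsub : C ⊆ S + ball (0 : E) r)
    (hCpath : IsPathConnected C) :
    Metric.diam C ≤ 2 * (D + 1) * r :=
  stmt_2_general S D hD ρ hultra hlow hup r hr C hCsub hCpath
end

section
/- For every D > 1, every n ∈ ℕ, and every norm ‖·‖ on ℝⁿ, every subset S ⊆ ℝⁿ admitting an ultrametric ρ with ‖x−y‖ ≤ ρ(x,y) ≤ D·‖x−y‖ for all x,y ∈ S has Hausdorff dimension at most (1 − 1/(2(D+1)))·n. -/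
/-!
For `r > 0`, the closed `ρ`-balls of radius `2Dr` partition `S` into pieces of diameter at most
`2Dr`, and the `r`-thickenings of distinct pieces are disjoint, because points at distance `< 2r`
are `ρ`-close. The homothety of ratio `τ = (2D + 1) / (2D + θ)` about a point of a piece maps its
`θr`-thickening into its `r`-thickening, so for bounded `T ⊆ S` the Haar measure of the
`r`-thickening of `T` is at least `τⁿ` times that of its `θr`-thickening. Along the scales `θᵐ`,
with `θ = (2D + 1) / (2D + 2)`, the number of pieces is therefore `O((θτ)^(-nm))`, and the
`d`-dimensional Hausdorff sums of these covers decay geometrically once `θ ^ d < (θτ)ⁿ`, which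
holds for `d > (1 - 1/(2(D+1))) n` by Bernoulli's inequality.
-/

open MeasureTheory Module Metric Set Filter Topology TopologicalSpace
open scoped ENNReal

section Homothety

variable {E : Type*} [NormedAddCommGroup E] [NormedSpace ℝ E] [FiniteDimensional ℝ E]
  [MeasurableSpace E] [BorelSpace E] (μ : Measure E) [μ.IsAddHaarMeasure]

theorem ofReal_pow_mul_addHaar_thickening_le_of_subset_closedBall {K : Set E} {x : E}
    {u r r' : ℝ} (hr' : 0 < r') (hr'r : r' ≤ r) (hu : 0 ≤ u) (hK : K ⊆ closedBall x u) :
    ENNReal.ofReal (((u + r) / (u + r')) ^ finrank ℝ E) * μ (thickening r' K)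
      ≤ μ (thickening r K) := by
  set t := (u + r) / (u + r')
  have ht : t * (u + r') = u + r := div_mul_cancel₀ _ (by positivity)
  have ht1 : 1 ≤ t := (one_le_div (by positivity)).2 (by linarith)
  rw [← abs_of_nonneg (by positivity : 0 ≤ t ^ finrank ℝ E),
    ← Measure.addHaar_image_homothety]
  refine measure_mono ?_
  rintro _ ⟨z, hz, rfl⟩
  obtain ⟨y, hyK, hzy⟩ := mem_thickening_iff.1 hz
  refine mem_thickening_iff.2 ⟨y, hyK, ?_⟩
  have hyx : ‖y - x‖ ≤ u := by simpa [dist_eq_norm] using hK hyK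
  -- the homothety of ratio `t ≥ 1` about `x` moves `y ∈ K ⊆ closedBall x u` by at most `(t - 1) u`
  calc dist (AffineMap.homothety x t z) y = ‖t • (z - y) + (t - 1) • (y - x)‖ := by
        rw [dist_eq_norm, AffineMap.homothety_apply, vsub_eq_sub, vadd_eq_add]; congr 1; module
    _ ≤ t * ‖z - y‖ + (t - 1) * ‖y - x‖ := by
        refine (norm_add_le _ _).trans_eq ?_
        rw [norm_smul, norm_smul, Real.norm_of_nonneg (by linarith),
          Real.norm_of_nonneg (by linarith)]
    _ < t * r' + (t - 1) * u := by
        rw [← dist_eq_norm]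
        exact add_lt_add_of_lt_of_le (mul_lt_mul_of_pos_left hzy (by linarith))
          (mul_le_mul_of_nonneg_left hyx (by linarith))
    _ = r := by linarith

end Homothety

structure IsSeparatedCover {X : Type*} [PseudoMetricSpace X] (T : Set X) (u r : ℝ)
    (𝒞 : Set (Set X)) : Prop where
  sUnion_eq : ⋃₀ 𝒞 = T
  nonempty : ∀ K ∈ 𝒞, K.Nonempty
  dist_le : ∀ K ∈ 𝒞, ∀ x ∈ K, ∀ y ∈ K, dist x y ≤ u
  pairwiseDisjoint_thickening : 𝒞.PairwiseDisjoint (thickening r)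

namespace IsSeparatedCover

section PseudoMetric

variable {X : Type*} [PseudoMetricSpace X] {T : Set X} {u r : ℝ} {𝒞 : Set (Set X)}

theorem subset (h : IsSeparatedCover T u r 𝒞) {K : Set X} (hK : K ∈ 𝒞) : K ⊆ T :=
  h.sUnion_eq ▸ subset_sUnion_of_mem hK

theorem countable [SeparableSpace X] (h : IsSeparatedCover T u r 𝒞) (hr : 0 < r) :
    𝒞.Countable :=
  h.pairwiseDisjoint_thickening.countable_of_isOpen (fun _ _ => isOpen_thickening)
    fun K hK => (h.nonempty K hK).mono (self_subset_thickening hr K)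

theorem tsum_measure_thickening_le [SeparableSpace X] [MeasurableSpace X]
    [OpensMeasurableSpace X] (μ : Measure X) (h : IsSeparatedCover T u r 𝒞) (hr : 0 < r) :
    ∑' K : 𝒞, μ (thickening r (K : Set X)) ≤ μ (thickening r T) := by
  rw [← measure_biUnion (h.countable hr) h.pairwiseDisjoint_thickening
    fun _ _ => isOpen_thickening.measurableSet]
  exact measure_mono <| iUnion₂_subset fun K hK => thickening_subset_of_subset r (h.subset hK)

end PseudoMetric

variable {E : Type*} [NormedAddCommGroup E] [NormedSpace ℝ E] [FiniteDimensional ℝ E]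
  [MeasurableSpace E] [BorelSpace E] (μ : Measure E) [μ.IsAddHaarMeasure]
  {T : Set E} {u r : ℝ} {𝒞 : Set (Set E)}

theorem ofReal_pow_mul_addHaar_thickening_le (h : IsSeparatedCover T u r 𝒞) {r' : ℝ}
    (hr' : 0 < r') (hr'r : r' ≤ r) (hu : 0 ≤ u) :
    ENNReal.ofReal (((u + r) / (u + r')) ^ finrank ℝ E) * μ (thickening r' T)
      ≤ μ (thickening r T) := by
  have hr : 0 < r := hr'.trans_le hr'r
  have hcover : thickening r' T ⊆ ⋃ K ∈ 𝒞, thickening r' K := by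
    rw [← h.sUnion_eq, sUnion_eq_biUnion, thickening_biUnion]
  calc ENNReal.ofReal (((u + r) / (u + r')) ^ finrank ℝ E) * μ (thickening r' T)
      ≤ ENNReal.ofReal (((u + r) / (u + r')) ^ finrank ℝ E)
          * ∑' K : 𝒞, μ (thickening r' (K : Set E)) :=
        mul_le_mul_right ((measure_mono hcover).trans
          (measure_biUnion_le μ (h.countable hr) _)) _
    _ = ∑' K : 𝒞, ENNReal.ofReal (((u + r) / (u + r')) ^ finrank ℝ E)
          * μ (thickening r' (K : Set E)) := ENNReal.tsum_mul_left.symm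
    _ ≤ ∑' K : 𝒞, μ (thickening r (K : Set E)) := by
        refine ENNReal.tsum_le_tsum fun ⟨K, hK⟩ => ?_
        obtain ⟨x, hx⟩ := h.nonempty K hK
        exact ofReal_pow_mul_addHaar_thickening_le_of_subset_closedBall μ hr' hr'r hu
          fun y hy => mem_closedBall.2 (h.dist_le K hK y hy x hx)
    _ ≤ μ (thickening r T) := h.tsum_measure_thickening_le μ hr

theorem tsum_ediam_rpow_mul_le (h : IsSeparatedCover T u r 𝒞) (hr : 0 < r) {d : ℝ}
    (hd : 0 ≤ d) :
    (∑' K : 𝒞, ediam (K : Set E) ^ d) * μ (ball 0 r)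
      ≤ ENNReal.ofReal u ^ d * μ (thickening r T) := by
  calc (∑' K : 𝒞, ediam (K : Set E) ^ d) * μ (ball 0 r)
      = ∑' K : 𝒞, ediam (K : Set E) ^ d * μ (ball 0 r) := ENNReal.tsum_mul_right.symm
    _ ≤ ∑' K : 𝒞, ENNReal.ofReal u ^ d * μ (thickening r (K : Set E)) := by
        refine ENNReal.tsum_le_tsum fun ⟨K, hK⟩ => ?_
        obtain ⟨x, hx⟩ := h.nonempty K hK
        refine mul_le_mul'
          (ENNReal.rpow_le_rpow (ediam_le_of_forall_dist_le (h.dist_le K hK)) hd) ?_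
        rw [← Measure.addHaar_ball_center μ x]
        exact measure_mono (ball_subset_thickening hx r)
    _ = ENNReal.ofReal u ^ d * ∑' K : 𝒞, μ (thickening r (K : Set E)) := ENNReal.tsum_mul_left
    _ ≤ ENNReal.ofReal u ^ d * μ (thickening r T) :=
        mul_le_mul_right (h.tsum_measure_thickening_le μ hr) _

end IsSeparatedCover

theorem tendsto_zero_of_mul_ofReal_pow_le {W : ℕ → ℝ≥0∞} {a b : ℝ} {v C : ℝ≥0∞}
    (hb : 0 ≤ b) (hba : b < a) (hv0 : v ≠ 0) (hv : v ≠ ∞) (hC : C ≠ ∞)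
    (h : ∀ m, W m * (ENNReal.ofReal (a ^ m) * v) ≤ ENNReal.ofReal (b ^ m) * C) :
    Tendsto W atTop (𝓝 0) := by
  have ha : 0 < a := hb.trans_lt hba
  have hbound : ∀ m, W m ≤ ENNReal.ofReal ((b / a) ^ m) * (C / v) := fun m => by
    have hcancel : ENNReal.ofReal (b ^ m) * C
        = ENNReal.ofReal ((b / a) ^ m) * (C / v) * (ENNReal.ofReal (a ^ m) * v) := by
      rw [div_pow, ENNReal.ofReal_div_of_pos (by positivity), mul_mul_mul_comm,
        ENNReal.div_mul_cancel (ENNReal.ofReal_pos.2 (by positivity)).ne'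
        ENNReal.ofReal_ne_top, ENNReal.div_mul_cancel hv0 hv]
    refine (ENNReal.mul_le_mul_iff_left ?_ ?_).1 ((h m).trans_eq hcancel)
    · exact mul_ne_zero (ENNReal.ofReal_pos.2 (by positivity)).ne' hv0
    · exact ENNReal.mul_ne_top ENNReal.ofReal_ne_top hv
  have hgeo : Tendsto (fun m : ℕ => ENNReal.ofReal ((b / a) ^ m) * (C / v)) atTop (𝓝 0) := by
    simpa using ENNReal.Tendsto.mul_const (ENNReal.tendsto_ofReal
      (tendsto_pow_atTop_nhds_zero_of_lt_one (div_nonneg hb ha.le) ((div_lt_one ha).2 hba)))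
      (Or.inr (ENNReal.div_ne_top hC hv0))
  exact tendsto_of_tendsto_of_tendsto_of_le_of_le tendsto_const_nhds hgeo (fun _ => zero_le)
    hbound

section Hausdorff

variable {E : Type*} [NormedAddCommGroup E] [NormedSpace ℝ E] [FiniteDimensional ℝ E]
  [MeasurableSpace E] [BorelSpace E] {T : Set E} {c θ : ℝ}

theorem ofReal_pow_pow_mul_addHaar_thickening_le (μ : Measure E) [μ.IsAddHaarMeasure]
    (hc : 0 ≤ c) (hθ0 : 0 < θ) (hθ1 : θ ≤ 1)
    (hT : ∀ r > 0, ∃ 𝒞, IsSeparatedCover T (c * r) r 𝒞) (m : ℕ) :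
    ENNReal.ofReal ((((c + 1) / (c + θ)) ^ finrank ℝ E) ^ m) * μ (thickening (θ ^ m) T)
      ≤ μ (thickening 1 T) := by
  induction m with
  | zero => simp
  | succ m ih =>
    have hr : 0 < θ ^ m := pow_pos hθ0 m
    obtain ⟨𝒞, h𝒞⟩ := hT _ hr
    have hstep := h𝒞.ofReal_pow_mul_addHaar_thickening_le μ (mul_pos hθ0 hr)
      (mul_le_of_le_one_left hr.le hθ1) (by positivity)
    have hratio : (c * θ ^ m + θ ^ m) / (c * θ ^ m + θ * θ ^ m) = (c + 1) / (c + θ) := by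
      rw [← add_one_mul, ← add_mul, mul_div_mul_right _ _ hr.ne']
    rw [hratio] at hstep
    calc ENNReal.ofReal ((((c + 1) / (c + θ)) ^ finrank ℝ E) ^ (m + 1))
          * μ (thickening (θ ^ (m + 1)) T)
        = ENNReal.ofReal ((((c + 1) / (c + θ)) ^ finrank ℝ E) ^ m)
          * (ENNReal.ofReal (((c + 1) / (c + θ)) ^ finrank ℝ E)
            * μ (thickening (θ * θ ^ m) T)) := by
          rw [pow_succ, ENNReal.ofReal_mul (by positivity), pow_succ', mul_assoc]
      _ ≤ ENNReal.ofReal ((((c + 1) / (c + θ)) ^ finrank ℝ E) ^ m)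
          * μ (thickening (θ ^ m) T) := mul_le_mul_right hstep _
      _ ≤ μ (thickening 1 T) := ih

theorem tsum_ediam_rpow_mul_ofReal_pow_le (μ : Measure E) [μ.IsAddHaarMeasure] (hc : 0 ≤ c)
    (hθ0 : 0 < θ) (hθ1 : θ ≤ 1) {d : ℝ} (hd : 0 ≤ d)
    (hT : ∀ r > 0, ∃ 𝒞, IsSeparatedCover T (c * r) r 𝒞) (m : ℕ) {𝒞 : Set (Set E)}
    (h𝒞 : IsSeparatedCover T (c * θ ^ m) (θ ^ m) 𝒞) :
    (∑' K : 𝒞, ediam (K : Set E) ^ d)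
        * (ENNReal.ofReal (((θ * ((c + 1) / (c + θ))) ^ finrank ℝ E) ^ m) * μ (ball 0 1))
      ≤ ENNReal.ofReal ((θ ^ d) ^ m) * (ENNReal.ofReal (c ^ d) * μ (thickening 1 T)) := by
  set n := finrank ℝ E
  set τ := (c + 1) / (c + θ)
  have hr : 0 < θ ^ m := pow_pos hθ0 m
  have hball : μ (ball 0 (θ ^ m)) = ENNReal.ofReal ((θ ^ m) ^ n) * μ (ball 0 1) :=
    Measure.addHaar_ball_of_pos μ 0 hr
  have hmesh_pow : ENNReal.ofReal (c * θ ^ m) ^ d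
      = ENNReal.ofReal ((θ ^ d) ^ m) * ENNReal.ofReal (c ^ d) := by
    rw [ENNReal.ofReal_rpow_of_nonneg (by positivity) hd, Real.mul_rpow hc hr.le,
      ← Real.rpow_pow_comm hθ0.le, mul_comm, ENNReal.ofReal_mul (by positivity)]
  calc (∑' K : 𝒞, ediam (K : Set E) ^ d) * (ENNReal.ofReal (((θ * τ) ^ n) ^ m) * μ (ball 0 1))
      = (∑' K : 𝒞, ediam (K : Set E) ^ d) * μ (ball 0 (θ ^ m))
          * ENNReal.ofReal ((τ ^ n) ^ m) := by
        rw [mul_pow, mul_pow, ← pow_right_comm, ENNReal.ofReal_mul (by positivity), hball]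
        ring
    _ ≤ ENNReal.ofReal (c * θ ^ m) ^ d * μ (thickening (θ ^ m) T)
          * ENNReal.ofReal ((τ ^ n) ^ m) :=
        mul_le_mul_left (h𝒞.tsum_ediam_rpow_mul_le μ hr hd) _
    _ = ENNReal.ofReal ((θ ^ d) ^ m) * ENNReal.ofReal (c ^ d)
          * (ENNReal.ofReal ((τ ^ n) ^ m) * μ (thickening (θ ^ m) T)) := by
        rw [hmesh_pow]; ring
    _ ≤ ENNReal.ofReal ((θ ^ d) ^ m) * (ENNReal.ofReal (c ^ d) * μ (thickening 1 T)) :=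
        (mul_le_mul_right (ofReal_pow_pow_mul_addHaar_thickening_le μ hc hθ0 hθ1 hT m) _).trans_eq
          (mul_assoc _ _ _)

theorem hausdorffMeasure_eq_zero_of_isSeparatedCover (hTb : Bornology.IsBounded T)
    (hc : 0 ≤ c) (hθ0 : 0 < θ) (hθ1 : θ < 1) {d : ℝ} (hd : 0 ≤ d)
    (hθd : θ ^ d < (θ * ((c + 1) / (c + θ))) ^ finrank ℝ E)
    (hT : ∀ r > 0, ∃ 𝒞, IsSeparatedCover T (c * r) r 𝒞) : μH[d] T = 0 := by
  set μ : Measure E := Measure.addHaar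
  choose 𝒞 h𝒞 using fun m : ℕ => hT (θ ^ m) (pow_pos hθ0 m)
  have : ∀ m, Countable (𝒞 m) := fun m => ((h𝒞 m).countable (pow_pos hθ0 m)).to_subtype
  have hmesh : Tendsto (fun m : ℕ => ENNReal.ofReal (c * θ ^ m)) atTop (𝓝 0) := by
    simpa using ENNReal.tendsto_ofReal
      ((tendsto_pow_atTop_nhds_zero_of_lt_one hθ0.le hθ1).const_mul c)
  have hcover : ∀ m, T ⊆ ⋃ K : 𝒞 m, (K : Set E) := fun m => by
    rw [← sUnion_eq_iUnion, (h𝒞 m).sUnion_eq]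
  have hle := Measure.hausdorffMeasure_le_liminf_tsum d T _ hmesh
    (fun m (K : 𝒞 m) => (K : Set E))
    (Eventually.of_forall fun m K => ediam_le_of_forall_dist_le ((h𝒞 m).dist_le K K.2))
    (Eventually.of_forall hcover)
  have hdecay : Tendsto (fun m => ∑' K : 𝒞 m, ediam (K : Set E) ^ d) atTop (𝓝 0) :=
    tendsto_zero_of_mul_ofReal_pow_le (Real.rpow_nonneg hθ0.le d) hθd
      (measure_ball_pos μ 0 one_pos).ne' measure_ball_lt_top.ne
      (ENNReal.mul_ne_top ENNReal.ofReal_ne_top hTb.thickening.measure_lt_top.ne)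
      fun m => tsum_ediam_rpow_mul_ofReal_pow_le μ hc hθ0 hθ1.le hd hT m (h𝒞 m)
  exact le_antisymm (hle.trans hdecay.liminf_eq.le) zero_le

theorem rpow_lt_mul_pow_of_lt {c d : ℝ} (hc : 0 ≤ c) {n : ℕ}
    (hd : (1 - 1 / (c + 2)) * n < d) :
    ((c + 1) / (c + 2)) ^ d
      < ((c + 1) / (c + 2) * ((c + 1) / (c + (c + 1) / (c + 2)))) ^ n := by
  set θ := (c + 1) / (c + 2)
  set δ := 1 / (c + 2)
  have hθ0 : 0 < θ := by positivity
  have hθ1 : θ < 1 := (div_lt_one (by linarith)).2 (by linarith)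
  have hδ0 : 0 ≤ δ := by positivity
  have hδ1 : δ ≤ 1 := (div_le_one (by linarith)).2 (by linarith)
  -- Bernoulli: `θ ^ (-δ) = (1 + 1 / (c + 1)) ^ δ ≤ 1 + δ / (c + 1)`
  have hneg : θ ^ (-δ) ≤ (c + 1) / (c + θ) := by
    have hbern := rpow_one_add_le_one_add_mul_self
      (by linarith [one_div_pos.2 (by linarith : 0 < c + 1)] : (-1 : ℝ) ≤ 1 / (c + 1)) hδ0 hδ1
    have hθinv : θ ^ (-δ) = (1 + 1 / (c + 1)) ^ δ := by
      rw [Real.rpow_neg hθ0.le, ← Real.inv_rpow hθ0.le]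
      congr 1
      simp only [θ]
      field_simp
      ring
    rw [hθinv]
    refine hbern.trans ?_
    rw [le_div_iff₀ (by positivity)]
    simp only [θ, δ]
    field_simp
    nlinarith
  calc θ ^ d < θ ^ ((1 - δ) * n) := Real.rpow_lt_rpow_of_exponent_gt hθ0 hθ1 hd
    _ = (θ * θ ^ (-δ)) ^ n := by
        rw [Real.rpow_mul hθ0.le, Real.rpow_natCast, sub_eq_add_neg, Real.rpow_add hθ0,
          Real.rpow_one]
    _ ≤ (θ * ((c + 1) / (c + θ))) ^ n := by gcongr

theorem hausdorffMeasure_eq_zero_of_forall_isSeparatedCover (hTb : Bornology.IsBounded T)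
    (hc : 0 ≤ c) {d : ℝ} (hd : (1 - 1 / (c + 2)) * finrank ℝ E < d)
    (hT : ∀ r > 0, ∃ 𝒞, IsSeparatedCover T (c * r) r 𝒞) : μH[d] T = 0 := by
  have hd0 : 0 ≤ d := (mul_nonneg (sub_nonneg.2 ((div_le_one (by linarith)).2 (by linarith)))
    (Nat.cast_nonneg _)).trans hd.le
  exact hausdorffMeasure_eq_zero_of_isSeparatedCover hTb hc (by positivity)
    ((div_lt_one (by linarith)).2 (by linarith)) hd0 (rpow_lt_mul_pow_of_lt hc hd) hT

end Hausdorff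

section Ultrametric

variable {X : Type*} [PseudoMetricSpace X]

structure IsUltrametricDistortionOn (S : Set X) (ρ : X → X → ℝ) (D : ℝ) : Prop where
  symm : ∀ x ∈ S, ∀ y ∈ S, ρ x y = ρ y x
  le_max : ∀ x ∈ S, ∀ y ∈ S, ∀ z ∈ S, ρ x y ≤ max (ρ x z) (ρ z y)
  dist_le : ∀ x ∈ S, ∀ y ∈ S, dist x y ≤ ρ x y
  le_mul_dist : ∀ x ∈ S, ∀ y ∈ S, ρ x y ≤ D * dist x y

def closedBallOn (ρ : X → X → ℝ) (S : Set X) (x : X) (u : ℝ) : Set X := {y ∈ S | ρ x y ≤ u}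

namespace IsUltrametricDistortionOn

variable {S T : Set X} {ρ : X → X → ℝ} {D u : ℝ} {x y z : X}

theorem mono (h : IsUltrametricDistortionOn S ρ D) (hTS : T ⊆ S) :
    IsUltrametricDistortionOn T ρ D :=
  ⟨fun x hx y hy => h.symm x (hTS hx) y (hTS hy),
    fun x hx y hy z hz => h.le_max x (hTS hx) y (hTS hy) z (hTS hz),
    fun x hx y hy => h.dist_le x (hTS hx) y (hTS hy),
    fun x hx y hy => h.le_mul_dist x (hTS hx) y (hTS hy)⟩

theorem apply_self (h : IsUltrametricDistortionOn S ρ D) (hx : x ∈ S) : ρ x x = 0 :=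
  le_antisymm (by simpa using h.le_mul_dist x hx x hx) (by simpa using h.dist_le x hx x hx)

theorem mem_closedBallOn_self (h : IsUltrametricDistortionOn S ρ D) (hx : x ∈ S)
    (hu : 0 ≤ u) : x ∈ closedBallOn ρ S x u :=
  ⟨hx, (h.apply_self hx).trans_le hu⟩

theorem closedBallOn_eq_of_mem (h : IsUltrametricDistortionOn S ρ D) (hx : x ∈ S)
    (hy : y ∈ closedBallOn ρ S x u) : closedBallOn ρ S y u = closedBallOn ρ S x u := by
  obtain ⟨hyS, hxy⟩ := hy
  have hyx : ρ y x ≤ u := h.symm y hyS x hx ▸ hxy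
  ext z
  refine ⟨fun ⟨hzS, hyz⟩ => ⟨hzS, ?_⟩, fun ⟨hzS, hxz⟩ => ⟨hzS, ?_⟩⟩
  · exact (h.le_max x hx z hzS y hyS).trans (max_le hxy hyz)
  · exact (h.le_max y hyS z hzS x hx).trans (max_le hyx hxz)

theorem dist_le_of_mem_closedBallOn (h : IsUltrametricDistortionOn S ρ D) (hx : x ∈ S)
    (hy : y ∈ closedBallOn ρ S x u) (hz : z ∈ closedBallOn ρ S x u) : dist y z ≤ u := by
  rw [← h.closedBallOn_eq_of_mem hx hy] at hz
  exact (h.dist_le y hy.1 z hz.1).trans hz.2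

theorem isSeparatedCover (h : IsUltrametricDistortionOn S ρ D) (hD : 0 ≤ D) {r : ℝ}
    (hr : 0 < r) :
    IsSeparatedCover S (2 * D * r) r ((closedBallOn ρ S · (2 * D * r)) '' S) where
  sUnion_eq := by
    refine Subset.antisymm (sUnion_subset ?_) fun x hx => ⟨_, mem_image_of_mem _ hx,
      h.mem_closedBallOn_self hx (by positivity)⟩
    rintro _ ⟨x, -, rfl⟩
    exact sep_subset S _
  nonempty := by
    rintro _ ⟨x, hx, rfl⟩
    exact ⟨x, h.mem_closedBallOn_self hx (by positivity)⟩
  dist_le := by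
    rintro _ ⟨x, hx, rfl⟩ y hy z hz
    exact h.dist_le_of_mem_closedBallOn hx hy hz
  pairwiseDisjoint_thickening := by
    rintro _ ⟨x, hx, rfl⟩ _ ⟨x', hx', rfl⟩ hne
    dsimp only at hne ⊢
    refine disjoint_left.2 fun w hw hw' => hne ?_
    obtain ⟨a, ha, hwa⟩ := mem_thickening_iff.1 hw
    obtain ⟨b, hb, hwb⟩ := mem_thickening_iff.1 hw'
    have hab : b ∈ closedBallOn ρ S a (2 * D * r) := by
      refine ⟨hb.1, (h.le_mul_dist a ha.1 b hb.1).trans ?_⟩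
      have : dist a b < 2 * r := by linarith [dist_triangle_left a b w]
      nlinarith
    rw [← h.closedBallOn_eq_of_mem hx ha, ← h.closedBallOn_eq_of_mem hx' hb,
      h.closedBallOn_eq_of_mem ha.1 hab]

end IsUltrametricDistortionOn

end Ultrametric

theorem dimH_le_ofReal_of_forall_hausdorffMeasure_eq_zero {X : Type*} [EMetricSpace X]
    [MeasurableSpace X] [BorelSpace X] {s : Set X} {a : ℝ}
    (h : ∀ d : ℝ, a < d → μH[d] s = 0) : dimH s ≤ ENNReal.ofReal a := by
  refine dimH_le fun d hd => le_of_not_gt fun hlt => ?_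
  rw [← ENNReal.ofReal_coe_nnreal, ENNReal.ofReal_lt_ofReal_iff'] at hlt
  exact ENNReal.zero_ne_top (h d hlt.1 ▸ hd)

/-- Main theorem: for every `D > 1`, every `n`, and every norm on `ℝⁿ` (formalized as an
`n`-dimensional real normed space `E`), any subset `S ⊆ E` admitting an ultrametric `ρ`
with `‖x-y‖ ≤ ρ(x,y) ≤ D‖x-y‖` on `S` has Hausdorff dimension at most
`(1 - 1/(2(D+1))) n`. -/
theorem stmt_3 {E : Type*} [NormedAddCommGroup E] [NormedSpace ℝ E] [FiniteDimensional ℝ E]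
    (n : ℕ) (hn : finrank ℝ E = n) (D : ℝ) (hD : 1 < D)
    (S : Set E) (ρ : E → E → ℝ)
    (hsymm : ∀ x ∈ S, ∀ y ∈ S, ρ x y = ρ y x)
    (hultra : ∀ x ∈ S, ∀ y ∈ S, ∀ z ∈ S, ρ x y ≤ max (ρ x z) (ρ z y))
    (hlow : ∀ x ∈ S, ∀ y ∈ S, ‖x - y‖ ≤ ρ x y)
    (hup : ∀ x ∈ S, ∀ y ∈ S, ρ x y ≤ D * ‖x - y‖) :
    dimH S ≤ ENNReal.ofReal ((1 - 1 / (2 * (D + 1))) * n) := by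
  subst hn
  borelize E
  have hρ : IsUltrametricDistortionOn S ρ D :=
    ⟨hsymm, hultra, by simpa only [dist_eq_norm] using hlow,
      by simpa only [dist_eq_norm] using hup⟩
  refine dimH_le_ofReal_of_forall_hausdorffMeasure_eq_zero fun d hd =>
    measure_null_of_locally_null S fun x _ =>
      ⟨S ∩ ball x 1, inter_mem_nhdsWithin S (ball_mem_nhds x one_pos), ?_⟩
  refine hausdorffMeasure_eq_zero_of_forall_isSeparatedCover (c := 2 * D)
    (isBounded_ball.subset inter_subset_right) (by linarith) ?_
    fun r hr => ⟨_, (hρ.mono inter_subset_left).isSeparatedCover (by linarith) hr⟩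
  rwa [show 2 * D + 2 = 2 * (D + 1) by ring]
end

section
/- Let ‖·‖ be a norm on ℝⁿ, S ⊆ ℝⁿ a set with ultrametric distortion at most D (D ≥ 1), and let δ > 0 and r > 0. Then the Lebesgue measures satisfy vol(S + B°(r)) ≤ (1 − (e^δ − 1)/(2(D+1)e^δ))ⁿ · vol(S + B°(e^δ r)), where B°(t) = {x : ‖x‖ < t} and + denotes Minkowski sum. -/
/-!
Fix `t = e^δ r` and cut `S` into the classes of the relation `ρ x y ≤ 2Dt`, an equivalence
relation because `ρ` is an ultrametric. Points of different classes are more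
than `2t` apart, so the `t`-neighbourhoods of the classes are disjoint, while each class has
diameter at most `2Dt`. For a class `C` containing `p`, the neighbourhood `C + B°(r)` lies in the
image of `C + B°(t)` under the homothety of centre `p` and ratio
`λ = 1 - (e^δ - 1)/(2(D+1)e^δ)`, whose volume is `λⁿ` times that of `C + B°(t)`.
Summing over the (countably many) classes gives the bound.
-/

open Metric Pointwise MeasureTheory Module Real

section Ultrametric

variable {α : Type*} {S : Set α} {ρ : α → α → ℝ} {s : ℝ}

theorem ultrametric_le_of_le_of_le
    (hsymm : ∀ x ∈ S, ∀ y ∈ S, ρ x y = ρ y x)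
    (hultra : ∀ x ∈ S, ∀ y ∈ S, ∀ z ∈ S, ρ x y ≤ max (ρ x z) (ρ z y))
    {x y z : α} (hx : x ∈ S) (hy : y ∈ S) (hz : z ∈ S) (hxy : ρ x y ≤ s) (hxz : ρ x z ≤ s) :
    ρ y z ≤ s :=
  (hultra y hy z hz x hx).trans (max_le (hsymm y hy x hx ▸ hxy) hxz)

theorem exists_ultrametric_partition
    (hsymm : ∀ x ∈ S, ∀ y ∈ S, ρ x y = ρ y x)
    (hultra : ∀ x ∈ S, ∀ y ∈ S, ∀ z ∈ S, ρ x y ≤ max (ρ x z) (ρ z y))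
    (hrefl : ∀ x ∈ S, ρ x x ≤ s) :
    ∃ P : Set (Set α), ⋃₀ P = S ∧ (∀ c ∈ P, c.Nonempty ∧ c ⊆ S) ∧
      (∀ c ∈ P, ∀ y ∈ c, ∀ z ∈ c, ρ y z ≤ s) ∧
      P.Pairwise fun c c' => ∀ y ∈ c, ∀ z ∈ c', s < ρ y z := by
  set ball : α → Set α := fun x => {y | y ∈ S ∧ ρ x y ≤ s}
  have ball_eq {x y : α} (hx : x ∈ S) (hy : y ∈ S) (hxy : ρ x y ≤ s) : ball x = ball y := by
    ext z
    refine and_congr_right fun hz => ⟨fun hxz => ?_, fun hyz => ?_⟩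
    · exact ultrametric_le_of_le_of_le hsymm hultra hx hy hz hxy hxz
    · exact ultrametric_le_of_le_of_le hsymm hultra hy hx hz (hsymm x hx y hy ▸ hxy) hyz
  refine ⟨ball '' S, ?_, ?_, ?_, ?_⟩
  · refine subset_antisymm (Set.sUnion_subset ?_) fun x hx => ⟨ball x, ⟨x, hx, rfl⟩, hx, hrefl x hx⟩
    rintro _ ⟨x, -, rfl⟩
    exact fun y hy => hy.1
  · rintro _ ⟨x, hx, rfl⟩
    exact ⟨⟨x, hx, hrefl x hx⟩, fun y hy => hy.1⟩
  · rintro _ ⟨x, hx, rfl⟩ y ⟨hy, hxy⟩ z ⟨hz, hxz⟩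
    exact ultrametric_le_of_le_of_le hsymm hultra hx hy hz hxy hxz
  · rintro _ ⟨x, hx, rfl⟩ _ ⟨x', hx', rfl⟩ hne y ⟨hy, hxy⟩ z ⟨hz, hxz⟩
    by_contra! hyz
    exact hne ((ball_eq hx hy hxy).trans <| (ball_eq hy hz hyz).trans (ball_eq hx' hz hxz).symm)

end Ultrametric

section NormedSpace

variable {E : Type*} [NormedAddCommGroup E]

theorem disjoint_add_ball_of_le_norm_sub {A B : Set E} {t : ℝ}
    (h : ∀ y ∈ A, ∀ z ∈ B, 2 * t ≤ ‖y - z‖) : Disjoint (A + ball 0 t) (B + ball 0 t) := by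
  rw [Set.disjoint_left]
  rintro _ ⟨y, hy, b, hb, rfl⟩ ⟨z, hz, b', hb', hzy⟩
  rw [mem_ball_zero_iff] at hb hb'
  have : ‖y - z‖ < 2 * t := calc
    ‖y - z‖ = ‖b' - b‖ := by
      simp only at hzy
      rw [sub_eq_sub_iff_add_eq_add.2 (by rw [← hzy, add_comm])]
    _ ≤ ‖b'‖ + ‖b‖ := norm_sub_le _ _
    _ < 2 * t := by linarith
  exact (h y hy z hz).not_gt this

variable [NormedSpace ℝ E]

theorem add_ball_subset_image_homothety {C : Set E} {p : E} {s r t l : ℝ}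
    (hC : ∀ y ∈ C, ‖y - p‖ ≤ s) (hl₀ : 0 < l) (hl₁ : l ≤ 1) (hrt : (1 - l) * s + r ≤ l * t) :
    C + ball 0 r ⊆ AffineMap.homothety p l '' (C + ball 0 t) := by
  rintro _ ⟨y, hy, b, hb, rfl⟩
  rw [mem_ball_zero_iff] at hb
  set w : E := l⁻¹ • ((1 - l) • (y - p) + b)
  have hw : ‖w‖ < t := by
    rw [norm_smul, Real.norm_eq_abs, abs_of_pos (inv_pos.2 hl₀), inv_mul_lt_iff₀ hl₀]
    calc ‖(1 - l) • (y - p) + b‖ ≤ (1 - l) * ‖y - p‖ + ‖b‖ := by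
          refine (norm_add_le _ _).trans_eq ?_
          rw [norm_smul, Real.norm_of_nonneg (sub_nonneg.2 hl₁)]
      _ < (1 - l) * s + r :=
          add_lt_add_of_le_of_lt (mul_le_mul_of_nonneg_left (hC y hy) (sub_nonneg.2 hl₁)) hb
      _ ≤ l * t := hrt
  refine ⟨y + w, ⟨y, hy, w, mem_ball_zero_iff.2 hw, rfl⟩, ?_⟩
  show l • (y + w - p) + p = y + b
  rw [add_sub_right_comm, smul_add, smul_smul, mul_inv_cancel₀ hl₀.ne', one_smul]
  module

theorem addHaar_add_ball_le [FiniteDimensional ℝ E] [MeasurableSpace E] [BorelSpace E]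
    (μ : Measure E) [μ.IsAddHaarMeasure] {C : Set E} {p : E} {s r t l : ℝ}
    (hC : ∀ y ∈ C, ‖y - p‖ ≤ s) (hl₀ : 0 < l) (hl₁ : l ≤ 1) (hrt : (1 - l) * s + r ≤ l * t) :
    μ (C + ball 0 r) ≤ ENNReal.ofReal (l ^ finrank ℝ E) * μ (C + ball 0 t) := by
  calc μ (C + ball 0 r) ≤ μ (AffineMap.homothety p l '' (C + ball 0 t)) :=
        measure_mono (add_ball_subset_image_homothety hC hl₀ hl₁ hrt)
    _ = ENNReal.ofReal (l ^ finrank ℝ E) * μ (C + ball 0 t) := by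
        rw [Measure.addHaar_image_homothety, abs_of_pos (pow_pos hl₀ _)]

end NormedSpace

section ShrinkFactor

noncomputable def shrinkFactor (D a : ℝ) : ℝ := 1 - (a - 1) / (2 * (D + 1) * a)

variable {D a : ℝ}

theorem shrinkFactor_pos (hD : 0 ≤ D) (ha : 1 ≤ a) : 0 < shrinkFactor D a := by
  rw [shrinkFactor, sub_pos, div_lt_one (by positivity)]
  nlinarith

theorem shrinkFactor_le_one (hD : 0 ≤ D) (ha : 1 ≤ a) : shrinkFactor D a ≤ 1 :=
  sub_le_self _ (div_nonneg (by linarith) (by positivity))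

theorem shrinkFactor_mul_add_le (hD : 0 ≤ D) (ha : 1 ≤ a) {r : ℝ} (hr : 0 ≤ r) :
    (1 - shrinkFactor D a) * (2 * D * (a * r)) + r ≤ shrinkFactor D a * (a * r) := by
  have : shrinkFactor D a * (a * r) - ((1 - shrinkFactor D a) * (2 * D * (a * r)) + r) =
      (a - 1) * r / (2 * (D + 1)) := by
    rw [shrinkFactor]
    field_simp
    ring
  have : 0 ≤ (a - 1) * r / (2 * (D + 1)) := by
    have := sub_nonneg.2 ha
    positivity
  linarith

end ShrinkFactor

/-- Equation (2) of the paper: if `S` is a subset of `ℝⁿ` (an `n`-dimensional real normed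
space) with ultrametric distortion at most `D`, then for every `δ > 0` and `r > 0`,
`vol(S + B°(r)) ≤ (1 - (e^δ - 1)/(2(D+1)e^δ))ⁿ · vol(S + B°(e^δ r))`,
where `vol` is the (Haar–Lebesgue) measure. -/
theorem stmt_5 {E : Type*} [NormedAddCommGroup E] [NormedSpace ℝ E] [FiniteDimensional ℝ E]
    [MeasurableSpace E] [BorelSpace E] (μ : Measure E) [μ.IsAddHaarMeasure]
    (n : ℕ) (hn : finrank ℝ E = n) (D : ℝ) (hD : 1 ≤ D)
    (S : Set E) (ρ : E → E → ℝ)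
    (hsymm : ∀ x ∈ S, ∀ y ∈ S, ρ x y = ρ y x)
    (hultra : ∀ x ∈ S, ∀ y ∈ S, ∀ z ∈ S, ρ x y ≤ max (ρ x z) (ρ z y))
    (hlow : ∀ x ∈ S, ∀ y ∈ S, ‖x - y‖ ≤ ρ x y)
    (hup : ∀ x ∈ S, ∀ y ∈ S, ρ x y ≤ D * ‖x - y‖)
    (δ r : ℝ) (hδ : 0 < δ) (hr : 0 < r) :
    μ (S + ball (0 : E) r) ≤
      ENNReal.ofReal ((1 - (exp δ - 1) / (2 * (D + 1) * exp δ)) ^ n) *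
        μ (S + ball (0 : E) (exp δ * r)) := by
  have ha : 1 ≤ exp δ := one_le_exp hδ.le
  have hD₀ : 0 < D := by linarith
  set t := exp δ * r
  obtain ⟨P, hPS, hPne, hPdiam, hPsep⟩ :=
    exists_ultrametric_partition (s := 2 * D * t) hsymm hultra fun x hx =>
      (hup x hx x hx).trans (by rw [sub_self, norm_zero, mul_zero]; positivity)
  have hdisj : P.PairwiseDisjoint (· + ball (0 : E) t) := fun c hc c' hc' hne =>
    disjoint_add_ball_of_le_norm_sub fun y hy z hz => by
      have := (hPsep hc hc' hne y hy z hz).trans_le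
        (hup y ((hPne c hc).2 hy) z ((hPne c' hc').2 hz))
      nlinarith
  have hP : P.Countable := hdisj.countable_of_isOpen (fun _ _ => isOpen_ball.add_left)
    fun c hc => (hPne c hc).1.add (nonempty_ball.2 (by positivity))
  have hcluster (c : Set E) (hc : c ∈ P) : μ (c + ball 0 r) ≤
      ENNReal.ofReal (shrinkFactor D (exp δ) ^ n) * μ (c + ball 0 t) := by
    obtain ⟨p, hp⟩ := (hPne c hc).1
    rw [← hn]
    refine addHaar_add_ball_le μ (p := p) (fun y hy => ?_) (shrinkFactor_pos hD₀.le ha)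
      (shrinkFactor_le_one hD₀.le ha) (shrinkFactor_mul_add_le hD₀.le ha hr.le)
    exact (hlow y ((hPne c hc).2 hy) p ((hPne c hc).2 hp)).trans (hPdiam c hc y hy p hp)
  have hunion (u : ℝ) : S + ball (0 : E) u = ⋃ c ∈ P, c + ball 0 u := by
    rw [← hPS, Set.sUnion_add]
  change _ ≤ ENNReal.ofReal (shrinkFactor D (exp δ) ^ n) * μ (S + ball 0 t)
  calc μ (S + ball 0 r) ≤ ∑' c : P, μ ((c : Set E) + ball 0 r) :=
        hunion r ▸ measure_biUnion_le μ hP _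
    _ ≤ ∑' c : P, ENNReal.ofReal (shrinkFactor D (exp δ) ^ n) * μ ((c : Set E) + ball 0 t) :=
        ENNReal.tsum_le_tsum fun c => hcluster c c.2
    _ = ENNReal.ofReal (shrinkFactor D (exp δ) ^ n) * μ (S + ball 0 t) := by
        rw [ENNReal.tsum_mul_left, hunion t,
          measure_biUnion hP hdisj fun _ _ => isOpen_ball.add_left.measurableSet]
end

section
/- Let ‖·‖ be a norm on ℝⁿ, S ⊆ ℝⁿ, and 0 < r < R. If C is a path-component of S + B°(R), and A = ((S ∩ C) + B°(r)), then C = A + B°(R − r). -/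
open Metric Pointwise

/-!
Every point `s + b` of `S + B°(R)` (with `s ∈ S`, `‖b‖ < R`) lies in the convex ball
`B°(s, R) ⊆ S + B°(R)`, so it is joined to `s` inside `S + B°(R)`. Hence a path-component `C` of
`S + B°(R)` is exactly `(S ∩ C) + B°(R)`, and `B°(r) + B°(R - r) = B°(R)` for `0 < r < R`.
-/

section

variable {E : Type*} [NormedAddCommGroup E]

theorem ball_subset_add_ball {S : Set E} {s : E} (hs : s ∈ S) (R : ℝ) :
    ball s R ⊆ S + ball 0 R := by
  rw [← singleton_add_ball_zero]
  exact Set.add_subset_add_right (Set.singleton_subset_iff.mpr hs)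

variable [NormedSpace ℝ E]

theorem ball_subset_pathComponentIn_add_ball {S : Set E} {s : E} (hs : s ∈ S) (R : ℝ) :
    ball s R ⊆ pathComponentIn (S + ball 0 R) s := by
  intro y hy
  have hR : 0 < R := pos_of_mem_ball hy
  exact ((convex_ball s R).isPathConnected (nonempty_ball.mpr hR)).subset_pathComponentIn
    (mem_ball_self hR) (ball_subset_add_ball hs R) hy

theorem pathComponentIn_add_ball_eq (S : Set E) (R : ℝ) (x : E) :
    pathComponentIn (S + ball 0 R) x = (S ∩ pathComponentIn (S + ball 0 R) x) + ball 0 R := by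
  apply subset_antisymm
  · intro c hc
    obtain ⟨s, hs, b, hb, rfl⟩ := pathComponentIn_subset hc
    have hsb : s + b ∈ pathComponentIn (S + ball 0 R) s :=
      ball_subset_pathComponentIn_add_ball hs R (add_mem_ball_iff_norm.mpr (mem_ball_zero_iff.mp hb))
    exact Set.add_mem_add ⟨hs, hc.trans hsb.symm⟩ hb
  · rintro _ ⟨s, ⟨hs, hxs⟩, b, hb, rfl⟩
    exact hxs.trans <|
      ball_subset_pathComponentIn_add_ball hs R (add_mem_ball_iff_norm.mpr (mem_ball_zero_iff.mp hb))

end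

theorem stmt_8_general {E : Type*} [NormedAddCommGroup E] [NormedSpace ℝ E]
    (S : Set E) (r R : ℝ) (hr : 0 < r) (hrR : r < R)
    (C : Set E) (hC : ∃ x ∈ S + ball (0 : E) R, C = pathComponentIn (S + ball (0 : E) R) x) :
    C = ((S ∩ C) + ball (0 : E) r) + ball (0 : E) (R - r) := by
  obtain ⟨x, -, rfl⟩ := hC
  rw [add_assoc, ball_add_ball hr (sub_pos.mpr hrR), add_zero, add_sub_cancel]
  exact pathComponentIn_add_ball_eq S R x

/-- If `C` is a path-component of `S + B°(R)` and `A = (S ∩ C) + B°(r)` with `0 < r < R`,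
then `C = A + B°(R - r)`. -/
theorem stmt_8 {E : Type*} [NormedAddCommGroup E] [NormedSpace ℝ E] [FiniteDimensional ℝ E]
    (S : Set E) (r R : ℝ) (hr : 0 < r) (hrR : r < R)
    (C : Set E) (hC : ∃ x ∈ S + ball (0 : E) R, C = pathComponentIn (S + ball (0 : E) R) x) :
    C = ((S ∩ C) + ball (0 : E) r) + ball (0 : E) (R - r) :=
  stmt_8_general S r R hr hrR C hC
end

section
/- Every separable ultrametric space embeds isometrically into Hilbert space. -/
/-!
Fix a dense sequence `a`. For `x` and `r > 0` call the least `n` with `a n ∈ closedBall x r` the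
leader of that ball, and let `S x ⊆ ℕ × ℝ` be the set of pairs (leader, radius). Closed balls of
equal radius in an ultrametric space are equal or disjoint, so at radius `r` the leaders of `x` and
`y` coincide when `d(x, y) ≤ r` and differ when `0 < r < d(x, y)`. For the measure
`μ = count ⊗ r dr` this gives `μ (S x ∆ S y) = 2 ∫₀^{d(x, y)} r dr = d(x, y)²`, so
`x ↦ 1_{S x} - 1_{S x₀}` is an isometry into `L²(μ)`, a separable Hilbert space and therefore
isometric to a subspace of `ℓ²`.
-/

open MeasureTheory Metric Set
open scoped ENNReal symmDiff

section Hilbert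
variable {𝕜 E : Type*} [RCLike 𝕜] [NormedAddCommGroup E] [InnerProductSpace 𝕜 E]

theorem Orthonormal.countable [TopologicalSpace.SeparableSpace E] {ι : Type*} {v : ι → E}
    (hv : Orthonormal 𝕜 v) : Countable ι := by
  have h_one_le : ∀ i j, i ≠ j → 1 ≤ dist (v i) (v j) := by
    intro i j hij
    have : ‖v i - v j‖ ^ 2 = 2 := by
      rw [@norm_sub_sq 𝕜, hv.1 i, hv.1 j, hv.2 hij]; norm_num
    rw [dist_eq_norm]
    nlinarith [norm_nonneg (v i - v j)]
  refine Pairwise.countable_of_isOpen_disjoint (fun i j hij => ball_disjoint_ball ?_)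
    (fun i => isOpen_ball (x := v i) (ε := 1 / 2)) (fun i => nonempty_ball.2 one_half_pos)
  linarith [h_one_le i j hij]

theorem exists_linearIsometry_lp_two_of_countable (ι : Type*) [Countable ι] :
    Nonempty (lp (fun _ : ι => 𝕜) 2 →ₗᵢ[𝕜] lp (fun _ : ℕ => 𝕜) 2) := by
  obtain ⟨k, hk⟩ := exists_injective_nat ι
  have hv := (default : HilbertBasis ℕ 𝕜 (lp (fun _ : ℕ => 𝕜) 2)).orthonormal.comp k hk
  exact ⟨hv.orthogonalFamily.linearIsometry⟩

theorem exists_linearIsometry_lp_two [CompleteSpace E] [TopologicalSpace.SeparableSpace E] :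
    Nonempty (E →ₗᵢ[𝕜] lp (fun _ : ℕ => 𝕜) 2) := by
  obtain ⟨w, b, -⟩ := exists_hilbertBasis 𝕜 E
  have := b.orthonormal.countable
  obtain ⟨T⟩ := exists_linearIsometry_lp_two_of_countable (𝕜 := 𝕜) w
  exact ⟨T.comp b.repr.toLinearIsometry⟩

end Hilbert

theorem exists_isometry_Lp_of_measure_symmDiff {X α : Type*} [PseudoMetricSpace X]
    [MeasurableSpace α] (μ : Measure α) {S : X → Set α} (hS : ∀ x, MeasurableSet (S x))
    (hμS : ∀ x y, μ (S x ∆ S y) = edist x y ^ 2) : ∃ f : X → Lp ℝ 2 μ, Isometry f := by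
  rcases isEmpty_or_nonempty X with _ | ⟨⟨x₀⟩⟩
  · exact ⟨isEmptyElim, isometry_subsingleton⟩
  let χ : X → α → ℝ := fun x => (S x).indicator fun _ => 1
  have hχ : ∀ x y, eLpNorm (χ x - χ y) 2 μ = edist x y := by
    intro x y
    rw [eLpNorm_indicator_sub_indicator,
      eLpNorm_indicator_const ((hS x).symmDiff (hS y)) two_ne_zero ENNReal.ofNat_ne_top, hμS,
      enorm_one, one_mul, ENNReal.toReal_ofNat, one_div]
    exact_mod_cast ENNReal.pow_rpow_inv_natCast two_ne_zero (edist x y)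
  have hmem : ∀ x, MemLp (χ x - χ x₀) 2 μ := fun x =>
    ⟨(((measurable_const.indicator (hS x)).sub
      (measurable_const.indicator (hS x₀))).aestronglyMeasurable),
      by rw [hχ]; exact edist_lt_top x x₀⟩
  refine ⟨fun x => (hmem x).toLp _, fun x y => ?_⟩
  rw [Lp.edist_toLp_toLp, sub_sub_sub_cancel_right, hχ]

section BallLeaders
variable {X : Type*} [PseudoMetricSpace X] (a : ℕ → X)

def ballLeaders (x : X) : Set (ℕ × ℝ) := {p | IsLeast {m | a m ∈ closedBall x p.2} p.1}

variable {a}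

theorem mem_ballLeaders_iff {x : X} {n : ℕ} {r : ℝ} :
    (n, r) ∈ ballLeaders a x ↔ dist (a n) x ≤ r ∧ ∀ m < n, r < dist (a m) x := by
  simp only [ballLeaders, IsLeast, lowerBounds, mem_ofPred_eq, mem_closedBall]
  refine and_congr_right fun _ => ⟨fun h m hm => ?_, fun h m hm => ?_⟩
  · exact lt_of_not_ge fun hm' => (h hm').not_gt hm
  · exact le_of_not_gt fun hmn => (h m hmn).not_ge hm

variable (a) in
theorem measurableSet_ballLeaders (x : X) : MeasurableSet (ballLeaders a x) := by
  have : ballLeaders a x =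
      ⋃ n, {n} ×ˢ (Ici (dist (a n) x) ∩ ⋂ m ∈ Finset.range n, Iio (dist (a m) x)) := by
    ext ⟨n, r⟩
    simp [mem_ballLeaders_iff]
  rw [this]
  exact .iUnion fun n => (measurableSet_singleton n).prod
    (measurableSet_Ici.inter (.biInter (to_countable _) fun m _ => measurableSet_Iio))

theorem exists_mem_ballLeaders (ha : DenseRange a) (x : X) {r : ℝ} (hr : 0 < r) :
    ∃ n, (n, r) ∈ ballLeaders a x := by
  classical
  have h : ∃ n, a n ∈ closedBall x r := by
    obtain ⟨n, hn⟩ := denseRange_iff.1 ha x r hr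
    exact ⟨n, mem_closedBall'.2 hn.le⟩
  exact ⟨_, Nat.isLeast_find h⟩

variable [IsUltrametricDist X]

theorem mem_ballLeaders_iff_of_dist_le {x y : X} {n : ℕ} {r : ℝ} (h : dist x y ≤ r) :
    (n, r) ∈ ballLeaders a x ↔ (n, r) ∈ ballLeaders a y := by
  simp only [ballLeaders, mem_ofPred_eq,
    IsUltrametricDist.closedBall_eq_of_mem (mem_closedBall'.2 h)]

theorem dist_le_of_mem_ballLeaders {x y : X} {n : ℕ} {r : ℝ} (hx : (n, r) ∈ ballLeaders a x)
    (hy : (n, r) ∈ ballLeaders a y) : dist x y ≤ r :=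
  (IsUltrametricDist.dist_triangle_max x (a n) y).trans
    (max_le (mem_closedBall'.1 hx.1) (mem_closedBall.1 hy.1))

theorem iUnion_preimage_ballLeaders_diff_subset (x y : X) :
    ⋃ n, Prod.mk n ⁻¹' (ballLeaders a x \ ballLeaders a y) ⊆ Ico 0 (dist x y) := by
  simp only [iUnion_subset_iff]
  rintro n r ⟨hx, hy⟩
  exact ⟨dist_nonneg.trans (mem_closedBall.1 hx.1),
    lt_of_not_ge fun h => hy ((mem_ballLeaders_iff_of_dist_le h).1 hx)⟩

theorem Ioo_subset_iUnion_preimage_ballLeaders_diff (ha : DenseRange a) (x y : X) :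
    Ioo 0 (dist x y) ⊆ ⋃ n, Prod.mk n ⁻¹' (ballLeaders a x \ ballLeaders a y) := by
  rintro r ⟨hr₀, hr⟩
  obtain ⟨n, hn⟩ := exists_mem_ballLeaders ha x hr₀
  exact mem_iUnion.2 ⟨n, hn, fun hy => (dist_le_of_mem_ballLeaders hn hy).not_gt hr⟩

theorem prod_count_ballLeaders_diff (ν : Measure ℝ) [SFinite ν] [NullSingletonClass ν]
    (ha : DenseRange a) (x y : X) :
    (Measure.count.prod ν) (ballLeaders a x \ ballLeaders a y) = ν (Ioo 0 (dist x y)) := by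
  have hmeas := (measurableSet_ballLeaders a x).diff (measurableSet_ballLeaders a y)
  rw [Measure.prod_apply hmeas, lintegral_count,
    ← measure_iUnion ?_ fun n => measurable_prodMk_left hmeas]
  · refine le_antisymm ?_ (measure_mono (Ioo_subset_iUnion_preimage_ballLeaders_diff ha x y))
    rw [measure_congr Ioo_ae_eq_Ico]
    exact measure_mono (iUnion_preimage_ballLeaders_diff_subset x y)
  · exact fun m n hmn => disjoint_left.2 fun r hm hn => hmn (IsLeast.unique hm.1 hn.1)

end BallLeaders

theorem withDensity_ofReal_Ioo_zero {d : ℝ} (hd : 0 ≤ d) :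
    volume.withDensity (fun r => ENNReal.ofReal r) (Ioo 0 d) = ENNReal.ofReal (d ^ 2 / 2) := by
  rw [withDensity_apply _ measurableSet_Ioo, ← ofReal_integral_eq_lintegral_ofReal,
    ← integral_Ioc_eq_integral_Ioo, ← intervalIntegral.integral_of_le hd, integral_id]
  · simp
  · exact continuous_id.integrableOn_Icc.mono_set Ioo_subset_Icc_self
  · exact ae_restrict_of_forall_mem measurableSet_Ioo fun r hr => hr.1.le

theorem prod_count_ballLeaders_symmDiff {X : Type*} [PseudoMetricSpace X] [IsUltrametricDist X]
    {a : ℕ → X} (ha : DenseRange a) (x y : X) :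
    (Measure.count.prod (volume.withDensity fun r => ENNReal.ofReal r))
      (ballLeaders a x ∆ ballLeaders a y) = edist x y ^ 2 := by
  rw [measure_symmDiff_eq (measurableSet_ballLeaders a x).nullMeasurableSet
      (measurableSet_ballLeaders a y).nullMeasurableSet,
    prod_count_ballLeaders_diff _ ha, prod_count_ballLeaders_diff _ ha, dist_comm y x,
    withDensity_ofReal_Ioo_zero dist_nonneg, ← ENNReal.ofReal_add (by positivity) (by positivity),
    add_halves, edist_dist, ENNReal.ofReal_pow dist_nonneg]

/-- Every separable ultrametric space embeds isometrically into the separable Hilbert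
space `ℓ²(ℕ, ℝ)`. -/
theorem stmt_12 {X : Type*} [MetricSpace X] [IsUltrametricDist X]
    [TopologicalSpace.SeparableSpace X] :
    ∃ f : X → lp (fun _ : ℕ => ℝ) 2, Isometry f := by
  rcases isEmpty_or_nonempty X with _ | _
  · exact ⟨isEmptyElim, isometry_subsingleton⟩
  let μ : Measure (ℕ × ℝ) := Measure.count.prod (volume.withDensity fun r => ENNReal.ofReal r)
  obtain ⟨F, hF⟩ := exists_isometry_Lp_of_measure_symmDiff μ
    (measurableSet_ballLeaders (TopologicalSpace.denseSeq X))
    (prod_count_ballLeaders_symmDiff (TopologicalSpace.denseRange_denseSeq X))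
  have : Fact ((2 : ℝ≥0∞) ≠ ∞) := ⟨ENNReal.ofNat_ne_top⟩
  obtain ⟨T⟩ := exists_linearIsometry_lp_two (𝕜 := ℝ) (E := Lp ℝ 2 μ)
  exact ⟨T ∘ F, T.isometry.comp hF⟩
end

section
/- Let ‖·‖ be a norm on ℝⁿ, D ≥ 1, and S ⊆ ℝⁿ a set with ultrametric distortion at most D. Then the Assouad dimension of S is at most (1 − 1/(2(D+1)))·n. -/
open Metric Module
open scoped ENNReal

/-- The Assouad dimension of a (pseudo)metric space: the infimum of all exponents `β ≥ 0`
such that for some constant `C > 0`, every ball of radius `R` can be covered by at most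
`C (R/r)^β` balls of radius `r`, for all `0 < r < R`. (Infimum in `ℝ≥0∞`; it is `⊤` if no
such `β` exists.) -/
noncomputable def assouadDim (X : Type*) [PseudoMetricSpace X] : ℝ≥0∞ :=
  sInf { b : ℝ≥0∞ | ∃ β : ℝ, b = ENNReal.ofReal β ∧ 0 ≤ β ∧ ∃ C : ℝ, 0 < C ∧
    ∀ (x : X) (R r : ℝ), 0 < r → r < R →
      ∃ T : Finset X, (T.card : ℝ) ≤ C * (R / r) ^ β ∧
        ball x R ⊆ ⋃ y ∈ T, ball y r }

/-!
Split an `r`-separated finite `Y ⊆ S` at the top level `Δ` of its ultrametric tree: the two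
clusters are `Δ / D` apart in norm, so their `Δ / (2D)`-thickenings are disjoint, and induction
gives `μ (thickening (Δ / 2D) Y) ≥ |Y| (Δ / r) ^ (n / (2D + 1)) μ (ball 0 (r / 2D))`. Raising the
scale from `Δ` to `τ` costs only the factor `(τ / Δ) ^ (n / (2D + 1))`: the homothety of ratio
`c = (2D + τ / Δ) / (2D + 1)` about a point of `Y` maps the smaller thickening into the larger
one, and `(τ / Δ) ^ (1 / (2D + 1)) ≤ c` by weighted AM-GM. Comparing with the volume of a ball of
radius `2R` bounds the `r`-separated subsets of `S ∩ B(x, R)` by `C (R / r) ^ ((1 - 1/(2D+1)) n)`,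
and a maximal separated set is a cover.
-/

open MeasureTheory Set

theorem rpow_one_div_add_one_le {a x : ℝ} (ha : 0 ≤ a) (hx : 0 ≤ x) :
    x ^ (1 / (a + 1)) ≤ (a + x) / (a + 1) := by
  have h := Real.geom_mean_le_arith_mean2_weighted (w₁ := 1 / (a + 1)) (w₂ := a / (a + 1))
    (p₁ := x) (p₂ := 1) (by positivity) (by positivity) hx zero_le_one (by field_simp; ring)
  rw [Real.one_rpow, mul_one] at h
  exact h.trans_eq (by field_simp; ring)

theorem disjoint_thickening_of_two_mul_le_dist {X : Type*} [PseudoMetricSpace X] {δ : ℝ}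
    {A B : Set X} (h : ∀ p ∈ A, ∀ q ∈ B, 2 * δ ≤ dist p q) :
    Disjoint (thickening δ A) (thickening δ B) := by
  refine Set.disjoint_left.2 fun z hzA hzB => ?_
  obtain ⟨p, hp, hzp⟩ := mem_thickening_iff.1 hzA
  obtain ⟨q, hq, hzq⟩ := mem_thickening_iff.1 hzB
  linarith [h p hp q hq, dist_triangle_left p q z]

theorem card_union_mul_le_measure_thickening {X : Type*} [PseudoMetricSpace X] [DecidableEq X]
    [MeasurableSpace X] [OpensMeasurableSpace X] (μ : Measure X) {δ : ℝ} {c : ℝ≥0∞}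
    {Y₁ Y₂ : Finset X} (hsep : ∀ p ∈ Y₁, ∀ q ∈ Y₂, 2 * δ ≤ dist p q)
    (h₁ : Y₁.card * c ≤ μ (thickening δ (Y₁ : Set X)))
    (h₂ : Y₂.card * c ≤ μ (thickening δ (Y₂ : Set X))) :
    (Y₁ ∪ Y₂).card * c ≤ μ (thickening δ ((Y₁ ∪ Y₂ : Finset X) : Set X)) := by
  calc ((Y₁ ∪ Y₂).card : ℝ≥0∞) * c ≤ (Y₁.card + Y₂.card) * c := by
        gcongr
        exact_mod_cast Finset.card_union_le Y₁ Y₂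
    _ ≤ μ (thickening δ (Y₁ : Set X)) + μ (thickening δ (Y₂ : Set X)) := by
        rw [add_mul]
        exact add_le_add h₁ h₂
    _ = μ (thickening δ ((Y₁ ∪ Y₂ : Finset X) : Set X)) := by
        rw [Finset.coe_union, thickening_union, measure_union
          (disjoint_thickening_of_two_mul_le_dist hsep) isOpen_thickening.measurableSet]

theorem exists_finset_subset_iUnion_ball_card_le {X : Type*} [PseudoMetricSpace X] {A : Set X}
    {r : ℝ} (hr : 0 < r) {N : ℕ}
    (hN : ∀ T : Finset X, ↑T ⊆ A → (T : Set X).Pairwise (fun p q => r ≤ dist p q) → T.card ≤ N) :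
    ∃ T : Finset X, T.card ≤ N ∧ A ⊆ ⋃ y ∈ T, ball y r := by
  classical
  obtain ⟨T, ⟨hTA, hTsep⟩, hTmax⟩ := (measure fun T : Finset X => N - T.card).wf.has_min
    {T | ↑T ⊆ A ∧ (T : Set X).Pairwise fun p q => r ≤ dist p q} ⟨∅, by simp⟩
  refine ⟨T, hN T hTA hTsep, fun a ha => ?_⟩
  by_contra hcov
  simp only [mem_iUnion, mem_ball, not_exists, not_lt] at hcov
  have haT : a ∉ T := fun haT => (hcov a haT).not_gt (by simpa using hr)
  have hins : ↑(insert a T) ⊆ A ∧ ((insert a T : Finset X) : Set X).Pairwise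
      fun p q => r ≤ dist p q := by
    refine ⟨by simpa using insert_subset ha hTA, ?_⟩
    rw [Finset.coe_insert]
    exact hTsep.insert fun b hb _ => ⟨hcov b hb, dist_comm a b ▸ hcov b hb⟩
  have hcard := hN _ hins.1 hins.2
  rw [Finset.card_insert_of_notMem haT] at hcard
  exact hTmax _ hins (show N - (insert a T).card < N - T.card by
    rw [Finset.card_insert_of_notMem haT]; omega)

theorem assouadDim_le_of_card_le {X : Type*} [PseudoMetricSpace X] {β C : ℝ} (hβ : 0 ≤ β)
    (hC : 0 < C) (h : ∀ (x : X) (R r : ℝ), 0 < r → r < R → ∀ T : Finset X, ↑T ⊆ ball x R →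
      (T : Set X).Pairwise (fun p q => r ≤ dist p q) → (T.card : ℝ) ≤ C * (R / r) ^ β) :
    assouadDim X ≤ ENNReal.ofReal β := by
  refine sInf_le ⟨β, rfl, hβ, C, hC, fun x R r hr hrR => ?_⟩
  obtain ⟨T, hT, hcover⟩ := exists_finset_subset_iUnion_ball_card_le hr
    (N := ⌊C * (R / r) ^ β⌋₊) fun T hTA hTsep => Nat.le_floor (h x R r hr hrR T hTA hTsep)
  exact ⟨T, (Nat.cast_le.2 hT).trans (Nat.floor_le
    (mul_nonneg hC.le (Real.rpow_nonneg (div_nonneg (by linarith) hr.le) _))), hcover⟩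

section Homothety

variable {E : Type*} [NormedAddCommGroup E] [NormedSpace ℝ E]

theorem homothety_image_thickening_subset {x : E} {L s c : ℝ} {Y : Set E}
    (hY : Y ⊆ closedBall x L) (hc : 1 ≤ c) :
    AffineMap.homothety x c '' thickening s Y ⊆ thickening (c * s + (c - 1) * L) Y := by
  rintro _ ⟨z, hz, rfl⟩
  obtain ⟨y, hy, hzy⟩ := mem_thickening_iff.1 hz
  refine mem_thickening_iff.2 ⟨y, hy, ?_⟩
  have hyx : dist y x ≤ L := hY hy
  have hsplit : AffineMap.homothety x c z - y = c • (z - y) + (c - 1) • (y - x) := by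
    simp only [AffineMap.homothety_apply, vsub_eq_sub, vadd_eq_add, smul_sub, sub_smul, one_smul]
    abel
  calc dist (AffineMap.homothety x c z) y ≤ c * dist z y + (c - 1) * dist y x := by
        rw [dist_eq_norm, hsplit, dist_eq_norm, dist_eq_norm]
        refine (norm_add_le _ _).trans_eq ?_
        rw [norm_smul, norm_smul, Real.norm_of_nonneg (by linarith),
          Real.norm_of_nonneg (by linarith)]
    _ < c * s + (c - 1) * L :=
        add_lt_add_of_lt_of_le (mul_lt_mul_of_pos_left hzy (by linarith))
          (mul_le_mul_of_nonneg_left hyx (by linarith))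

variable [FiniteDimensional ℝ E] [MeasurableSpace E] [BorelSpace E] (μ : Measure E)
  [μ.IsAddHaarMeasure]

theorem ofReal_pow_mul_measure_thickening_le {x : E} {L s c : ℝ} {Y : Set E}
    (hY : Y ⊆ closedBall x L) (hc : 1 ≤ c) :
    ENNReal.ofReal (c ^ finrank ℝ E) * μ (thickening s Y)
      ≤ μ (thickening (c * s + (c - 1) * L) Y) := by
  calc ENNReal.ofReal (c ^ finrank ℝ E) * μ (thickening s Y)
      = μ (AffineMap.homothety x c '' thickening s Y) := by
        rw [Measure.addHaar_image_homothety, abs_of_nonneg (by positivity)]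
    _ ≤ _ := measure_mono (homothety_image_thickening_subset hY hc)

theorem ofReal_rpow_mul_measure_thickening_le {x : E} {k Δ τ : ℝ} {Y : Set E} (hk : 0 < k)
    (hΔ : 0 < Δ) (hΔτ : Δ ≤ τ) (hY : Y ⊆ closedBall x Δ) :
    ENNReal.ofReal ((τ / Δ) ^ ((finrank ℝ E : ℝ) / (k + 1))) * μ (thickening (Δ / k) Y)
      ≤ μ (thickening (τ / k) Y) := by
  set c := (k + τ / Δ) / (k + 1)
  have hτΔ : 1 ≤ τ / Δ := (one_le_div hΔ).2 hΔτ
  have hc : 1 ≤ c := (one_le_div (by linarith)).2 (by linarith)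
  have hradius : c * (Δ / k) + (c - 1) * Δ = τ / k := by
    simp only [c]; field_simp; ring
  have hpow : (τ / Δ) ^ ((finrank ℝ E : ℝ) / (k + 1)) ≤ c ^ finrank ℝ E := by
    rw [show (finrank ℝ E : ℝ) / (k + 1) = 1 / (k + 1) * finrank ℝ E by ring,
      Real.rpow_mul_natCast (by positivity)]
    exact pow_le_pow_left₀ (by positivity) (rpow_one_div_add_one_le hk.le (by positivity)) _
  calc ENNReal.ofReal ((τ / Δ) ^ ((finrank ℝ E : ℝ) / (k + 1))) * μ (thickening (Δ / k) Y)
      ≤ ENNReal.ofReal (c ^ finrank ℝ E) * μ (thickening (Δ / k) Y) := by gcongr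
    _ ≤ μ (thickening (τ / k) Y) :=
        hradius ▸ ofReal_pow_mul_measure_thickening_le μ hY hc

theorem mul_ofReal_rpow_le_measure_thickening {x : E} {k r Δ τ : ℝ} {Y : Set E} {c : ℝ≥0∞}
    (hk : 0 < k) (hr : 0 < r) (hrΔ : r ≤ Δ) (hΔτ : Δ ≤ τ) (hY : Y ⊆ closedBall x Δ)
    (hΔ : c * ENNReal.ofReal ((Δ / r) ^ ((finrank ℝ E : ℝ) / (k + 1)))
      ≤ μ (thickening (Δ / k) Y)) :
    c * ENNReal.ofReal ((τ / r) ^ ((finrank ℝ E : ℝ) / (k + 1))) ≤ μ (thickening (τ / k) Y) := by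
  set e := (finrank ℝ E : ℝ) / (k + 1)
  have hΔ0 : 0 < Δ := hr.trans_le hrΔ
  have hτ0 : 0 < τ := hΔ0.trans_le hΔτ
  have hsplit : (τ / r) ^ e = (τ / Δ) ^ e * (Δ / r) ^ e := by
    rw [← Real.mul_rpow (by positivity) (by positivity)]
    congr 1
    field_simp
  calc c * ENNReal.ofReal ((τ / r) ^ e)
      = ENNReal.ofReal ((τ / Δ) ^ e) * (c * ENNReal.ofReal ((Δ / r) ^ e)) := by
        rw [hsplit, ENNReal.ofReal_mul (by positivity)]
        ring
    _ ≤ ENNReal.ofReal ((τ / Δ) ^ e) * μ (thickening (Δ / k) Y) := by gcongr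
    _ ≤ μ (thickening (τ / k) Y) := ofReal_rpow_mul_measure_thickening_le μ hk hΔ0 hΔτ hY

end Homothety

structure IsUltrametricDistortion {E : Type*} [NormedAddCommGroup E] (S : Set E)
    (ρ : E → E → ℝ) (D : ℝ) : Prop where
  le_max : ∀ x ∈ S, ∀ y ∈ S, ∀ z ∈ S, ρ x y ≤ max (ρ x z) (ρ z y)
  norm_sub_le : ∀ x ∈ S, ∀ y ∈ S, ‖x - y‖ ≤ ρ x y
  le_mul_norm_sub : ∀ x ∈ S, ∀ y ∈ S, ρ x y ≤ D * ‖x - y‖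

namespace IsUltrametricDistortion

variable {E : Type*} [NormedAddCommGroup E] {S : Set E} {ρ : E → E → ℝ} {D : ℝ}

theorem exists_split [DecidableEq E] (h : IsUltrametricDistortion S ρ D) {Y : Finset E}
    (hYS : ↑Y ⊆ S) (hY : 1 < Y.card) {τ : ℝ} (hτ : ∀ p ∈ Y, ∀ q ∈ Y, ρ p q ≤ τ) :
    ∃ Δ ≤ τ, ∃ Y₁ Y₂ : Finset E, Y₁.Nonempty ∧ Y₂.Nonempty ∧ Disjoint Y₁ Y₂ ∧ Y₁ ∪ Y₂ = Y ∧
      (∀ p ∈ Y, ∀ q ∈ Y, ρ p q ≤ Δ) ∧ ∀ p ∈ Y₁, ∀ q ∈ Y₂, Δ ≤ ρ p q := by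
  obtain ⟨⟨a, b⟩, hab, hmax⟩ := (Y ×ˢ Y).exists_max_image (fun pq => ρ pq.1 pq.2)
    (Finset.card_pos.1 (by rw [Finset.card_product]; positivity))
  obtain ⟨ha, hb⟩ := Finset.mem_product.1 hab
  have hle : ∀ p ∈ Y, ∀ q ∈ Y, ρ p q ≤ ρ a b :=
    fun p hp q hq => hmax (p, q) (Finset.mem_product.2 ⟨hp, hq⟩)
  have hpos : 0 < ρ a b := by
    obtain ⟨p, hp, q, hq, hpq⟩ := Finset.one_lt_card.1 hY
    calc 0 < ‖p - q‖ := norm_pos_iff.2 (sub_ne_zero.2 hpq)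
      _ ≤ ρ p q := h.norm_sub_le p (hYS hp) q (hYS hq)
      _ ≤ ρ a b := hle p hp q hq
  -- By the ultrametric inequality, the open `ρ`-ball of radius `ρ a b` about `a` is at
  -- `ρ`-distance at least `ρ a b` from the rest of `Y`.
  refine ⟨ρ a b, hτ a ha b hb, Y.filter (ρ a · < ρ a b), Y.filter (¬ ρ a · < ρ a b),
    ⟨a, Finset.mem_filter.2 ⟨ha, ?_⟩⟩, ⟨b, Finset.mem_filter.2 ⟨hb, lt_irrefl _⟩⟩,
    Finset.disjoint_filter_filter_not _ _ _, Finset.filter_union_filter_not_eq _ _, hle, ?_⟩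
  · simpa using (h.le_mul_norm_sub a (hYS ha) a (hYS ha)).trans_lt (by simpa using hpos)
  · intro p hp q hq
    simp only [Finset.mem_filter, not_lt] at hp hq
    rcases le_max_iff.1 (h.le_max a (hYS ha) q (hYS hq.1) p (hYS hp.1)) with h' | h' <;>
      linarith [hp.2, hq.2]

section Volume

variable [NormedSpace ℝ E] [FiniteDimensional ℝ E] [MeasurableSpace E] [BorelSpace E]

theorem card_mul_measure_ball_le_measure_thickening (h : IsUltrametricDistortion S ρ D)
    (hD : 0 < D) (μ : Measure E) [μ.IsAddHaarMeasure] {r : ℝ} (hr : 0 < r) (Y : Finset E)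
    (hYS : ↑Y ⊆ S) (hsep : (Y : Set E).Pairwise fun p q => r ≤ dist p q) {τ : ℝ} (hrτ : r ≤ τ)
    (hτ : ∀ p ∈ Y, ∀ q ∈ Y, ρ p q ≤ τ) :
    Y.card * μ (ball 0 (r / (2 * D)))
        * ENNReal.ofReal ((τ / r) ^ ((finrank ℝ E : ℝ) / (2 * D + 1)))
      ≤ μ (thickening (τ / (2 * D)) (Y : Set E)) := by
  classical
  induction Y using Finset.strongInduction generalizing τ with | H Y ih =>
  set e := (finrank ℝ E : ℝ) / (2 * D + 1)
  set V := μ (ball 0 (r / (2 * D)))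
  suffices ∃ Δ x, r ≤ Δ ∧ Δ ≤ τ ∧ (Y : Set E) ⊆ closedBall x Δ ∧
      Y.card * V * ENNReal.ofReal ((Δ / r) ^ e) ≤ μ (thickening (Δ / (2 * D)) (Y : Set E)) by
    obtain ⟨Δ, x, hrΔ, hΔτ, hYx, hΔ⟩ := this
    exact mul_ofReal_rpow_le_measure_thickening μ (by positivity) hr hrΔ hΔτ hYx hΔ
  rcases le_or_gt Y.card 1 with hY | hY
  · obtain ⟨y, hy⟩ := Finset.card_le_one_iff_subset_singleton.1 hY
    refine ⟨r, y, le_rfl, hrτ, fun z hz => ?_, ?_⟩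
    · rw [Finset.subset_singleton_iff'.1 hy z (Finset.mem_coe.1 hz)]
      exact mem_closedBall_self hr.le
    · rcases Finset.subset_singleton_iff.1 hy with rfl | rfl
      · simp
      · simp [V, Measure.addHaar_ball_center, div_self hr.ne']
  obtain ⟨Δ, hΔτ, Y₁, Y₂, ⟨a, ha⟩, ⟨b, hb⟩, hdisj, rfl, hle, hcross⟩ := h.exists_split hYS hY hτ
  have haY : a ∈ Y₁ ∪ Y₂ := Finset.mem_union_left _ ha
  have hbY : b ∈ Y₁ ∪ Y₂ := Finset.mem_union_right _ hb
  have hrΔ : r ≤ Δ := calc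
    r ≤ dist a b := hsep haY hbY fun hab => Finset.disjoint_left.1 hdisj ha (hab ▸ hb)
    _ ≤ ρ a b := dist_eq_norm a b ▸ h.norm_sub_le a (hYS haY) b (hYS hbY)
    _ ≤ Δ := hle a haY b hbY
  have ih' : ∀ Y' ⊂ Y₁ ∪ Y₂, Y'.card * (V * ENNReal.ofReal ((Δ / r) ^ e))
      ≤ μ (thickening (Δ / (2 * D)) (Y' : Set E)) := fun Y' hY' => by
    rw [← mul_assoc]
    exact ih Y' hY' ((Finset.coe_subset.2 hY'.subset).trans hYS)
      (hsep.mono (Finset.coe_subset.2 hY'.subset)) hrΔ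
      fun p hp q hq => hle p (hY'.subset hp) q (hY'.subset hq)
  have hcross' : ∀ p ∈ Y₁, ∀ q ∈ Y₂, 2 * (Δ / (2 * D)) ≤ dist p q := fun p hp q hq => by
    have := (hcross p hp q hq).trans (h.le_mul_norm_sub p (hYS (Finset.mem_union_left _ hp)) q
      (hYS (Finset.mem_union_right _ hq)))
    rw [dist_eq_norm, mul_div_assoc', mul_div_mul_left _ _ two_ne_zero, div_le_iff₀ hD]
    linarith
  refine ⟨Δ, a, hrΔ, hΔτ, fun y hy => ?_, ?_⟩
  · rw [mem_closedBall, dist_eq_norm]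
    exact (h.norm_sub_le y (hYS hy) a (hYS haY)).trans (hle y hy a haY)
  rw [mul_assoc]
  exact card_union_mul_le_measure_thickening μ hcross'
    (ih' Y₁ (Finset.ssubset_iff_of_subset Finset.subset_union_left |>.2
      ⟨b, hbY, Finset.disjoint_right.1 hdisj hb⟩))
    (ih' Y₂ (Finset.ssubset_iff_of_subset Finset.subset_union_right |>.2
      ⟨a, haY, Finset.disjoint_left.1 hdisj ha⟩))

end Volume

section FiniteDimensional

variable [NormedSpace ℝ E] [FiniteDimensional ℝ E]

theorem card_le_of_subset_ball (h : IsUltrametricDistortion S ρ D) (hD : 1 ≤ D) {x : E} {r R : ℝ}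
    (hr : 0 < r) (hrR : r ≤ R) {Y : Finset E} (hYS : ↑Y ⊆ S) (hYx : ↑Y ⊆ ball x R)
    (hsep : (Y : Set E).Pairwise fun p q => r ≤ dist p q) :
    (Y.card : ℝ) ≤ 2 ^ finrank ℝ E * (2 * D) ^ ((1 - 1 / (2 * D + 1)) * finrank ℝ E)
      * (R / r) ^ ((1 - 1 / (2 * D + 1)) * finrank ℝ E) := by
  let : MeasurableSpace E := borel E
  have : BorelSpace E := ⟨rfl⟩
  set μ : Measure E := Measure.addHaar
  set ν := finrank ℝ E
  set q := 2 * D * R / r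
  have hq : 1 ≤ q := (one_le_div hr).2 (by nlinarith)
  have hdiam : ∀ p ∈ Y, ∀ p' ∈ Y, ρ p p' ≤ 2 * D * R := fun p hp p' hp' => by
    have : dist p p' < 2 * R := by
      linarith [dist_triangle_right p p' x, mem_ball.1 (hYx hp), mem_ball.1 (hYx hp')]
    refine (h.le_mul_norm_sub p (hYS hp) p' (hYS hp')).trans ?_
    rw [← dist_eq_norm]
    nlinarith
  have hvol := h.card_mul_measure_ball_le_measure_thickening (by linarith) μ hr Y hYS hsep
    (by nlinarith) hdiam
  rw [show 2 * D * R / (2 * D) = R by field_simp] at hvol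
  have hball : μ (thickening R (Y : Set E))
      ≤ ENNReal.ofReal ((2 * q) ^ ν) * μ (ball 0 (r / (2 * D))) := by
    rw [← Measure.addHaar_ball_mul_of_pos μ x (by positivity),
      show 2 * q * (r / (2 * D)) = R + R by simp only [q]; field_simp; ring]
    exact measure_mono ((thickening_subset_of_subset R hYx).trans (Metric.thickening_ball x R R))
  have key : (Y.card : ℝ) * q ^ ((ν : ℝ) / (2 * D + 1)) ≤ (2 * q) ^ ν := by
    have hV : μ (ball 0 (r / (2 * D))) ≠ 0 := (measure_ball_pos μ 0 (by positivity)).ne'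
    have hμ := hvol.trans hball
    rwa [mul_right_comm, ← ENNReal.ofReal_natCast, ← ENNReal.ofReal_mul (by positivity),
      ENNReal.mul_le_mul_iff_left hV measure_ball_lt_top.ne,
      ENNReal.ofReal_le_ofReal_iff (by positivity)] at hμ
  calc (Y.card : ℝ) ≤ (2 * q) ^ ν / q ^ ((ν : ℝ) / (2 * D + 1)) :=
        (le_div_iff₀ (by positivity)).2 key
    _ = 2 ^ ν * q ^ ((1 - 1 / (2 * D + 1)) * ν) := by
        rw [mul_pow, ← Real.rpow_natCast q ν, mul_div_assoc, ← Real.rpow_sub (by positivity)]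
        congr 2
        ring
    _ = _ := by
        rw [show q = 2 * D * (R / r) from mul_div_assoc _ _ _,
          Real.mul_rpow (by positivity) (div_nonneg (hr.le.trans hrR) hr.le)]
        ring

theorem assouadDim_le (h : IsUltrametricDistortion S ρ D) (hD : 1 ≤ D) :
    assouadDim S ≤ ENNReal.ofReal ((1 - 1 / (2 * D + 1)) * finrank ℝ E) := by
  have hβ : 0 ≤ 1 - 1 / (2 * D + 1) := sub_nonneg.2 ((div_le_one (by linarith)).2 (by linarith))
  refine assouadDim_le_of_card_le (mul_nonneg hβ (Nat.cast_nonneg _))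
    (C := 2 ^ finrank ℝ E * (2 * D) ^ ((1 - 1 / (2 * D + 1)) * finrank ℝ E)) (by positivity)
    fun x R r hr hrR T hTx hTsep => ?_
  rw [← Finset.card_map (Function.Embedding.subtype (· ∈ S))]
  refine h.card_le_of_subset_ball hD hr hrR.le (x := x) ?_ ?_ ?_
  · simp
  · simpa [Set.image_subset_iff] using hTx
  · rw [Finset.coe_map, Function.Embedding.coe_subtype, Subtype.val_injective.injOn.pairwise_image]
    exact hTsep

end FiniteDimensional

end IsUltrametricDistortion

theorem stmt_18_general {E : Type*} [NormedAddCommGroup E] [NormedSpace ℝ E] [FiniteDimensional ℝ E]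
    (n : ℕ) (hn : finrank ℝ E = n) (D : ℝ) (hD : 1 ≤ D)
    (S : Set E) (ρ : E → E → ℝ)
    (hultra : ∀ x ∈ S, ∀ y ∈ S, ∀ z ∈ S, ρ x y ≤ max (ρ x z) (ρ z y))
    (hlow : ∀ x ∈ S, ∀ y ∈ S, ‖x - y‖ ≤ ρ x y)
    (hup : ∀ x ∈ S, ∀ y ∈ S, ρ x y ≤ D * ‖x - y‖) :
    assouadDim S ≤ ENNReal.ofReal ((1 - 1 / (2 * (D + 1))) * n) := by
  subst hn
  refine (IsUltrametricDistortion.assouadDim_le ⟨hultra, hlow, hup⟩ hD).trans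
    (ENNReal.ofReal_le_ofReal ?_)
  gcongr
  linarith

/-- If `S ⊆ ℝⁿ` (an `n`-dimensional real normed space) admits an ultrametric `ρ` with
`‖x-y‖ ≤ ρ(x,y) ≤ D‖x-y‖` on `S`, then the Assouad dimension of `S` is at most
`(1 - 1/(2(D+1))) n`. -/
theorem stmt_18 {E : Type*} [NormedAddCommGroup E] [NormedSpace ℝ E] [FiniteDimensional ℝ E]
    (n : ℕ) (hn : finrank ℝ E = n) (D : ℝ) (hD : 1 ≤ D)
    (S : Set E) (ρ : E → E → ℝ)
    (hsymm : ∀ x ∈ S, ∀ y ∈ S, ρ x y = ρ y x)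
    (hultra : ∀ x ∈ S, ∀ y ∈ S, ∀ z ∈ S, ρ x y ≤ max (ρ x z) (ρ z y))
    (hlow : ∀ x ∈ S, ∀ y ∈ S, ‖x - y‖ ≤ ρ x y)
    (hup : ∀ x ∈ S, ∀ y ∈ S, ρ x y ≤ D * ‖x - y‖) :
    assouadDim S ≤ ENNReal.ofReal ((1 - 1 / (2 * (D + 1))) * n) :=
  stmt_18_general n hn D hD S ρ hultra hlow hup
end
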